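/- arXiv:1409.6282 — 4 statements merged into one kernel-verified Lean document; each statement's English description precedes it below -/
import Mathlib

section
/- The set of ad-locally finite elements of HV is exactly ℂL_{0,0} + H, i.e., the set of all elements of the form a L_{0,0} + ∑ b_{α,j} H_{α,j} (finite sum) with a, b_{α,j} ∈ ℂ. -/
/-- The generalized Heisenberg–Virasoro algebra `HV(Γ)`: a complex Lie algebra `V` equipped
with a basis `{L_{α,i}, H_{α,i} | α ∈ Γ, i ∈ ℤ₊}` satisfying the defining bracket relations
(any term whose second index would be `-1` has coefficient `0`, so truncated subtraction
on `ℕ` is harmless). -/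
structure HVData (Γ : AddSubgroup ℂ) (V : Type*) [LieRing V] [LieAlgebra ℂ V] where
  L : Γ → ℕ → V
  H : Γ → ℕ → V
  basis : Module.Basis ((↥Γ × ℕ) ⊕ (↥Γ × ℕ)) ℂ V
  basis_inl : ∀ (α : Γ) (i : ℕ), basis (Sum.inl (α, i)) = L α i
  basis_inr : ∀ (α : Γ) (i : ℕ), basis (Sum.inr (α, i)) = H α i
  lie_L_L : ∀ (α β : Γ) (i j : ℕ),
    ⁅L α i, L β j⁆ = ((β : ℂ) - (α : ℂ)) • L (α + β) (i + j)
      + ((j : ℂ) - (i : ℂ)) • L (α + β) (i + j - 1)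
  lie_L_H : ∀ (α β : Γ) (i j : ℕ),
    ⁅L α i, H β j⁆ = (β : ℂ) • H (α + β) (i + j) + (j : ℂ) • H (α + β) (i + j - 1)
  lie_H_H : ∀ (α β : Γ) (i j : ℕ), ⁅H α i, H β j⁆ = 0

namespace HVData

variable {Γ : AddSubgroup ℂ} {V : Type*} [LieRing V] [LieAlgebra ℂ V]

/-- The abelian ideal `H` of `HV`, as a submodule. -/
noncomputable def Hspan (hv : HVData Γ V) : Submodule ℂ V :=
  Submodule.span ℂ (Set.range fun p : ↥Γ × ℕ => hv.H p.1 p.2)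

/-- The graded piece `HV_α = span{L_{α,i}, H_{α,i} | i ∈ ℤ₊}`. -/
noncomputable def grade (hv : HVData Γ V) (α : Γ) : Submodule ℂ V :=
  Submodule.span ℂ (Set.range (hv.L α) ∪ Set.range (hv.H α))

/-- A derivation `D` has degree `γ` if `D (HV_α) ⊆ HV_{α+γ}` for all `α ∈ Γ`. -/
def HasDegree (hv : HVData Γ V) (D : LieDerivation ℂ V V) (γ : Γ) : Prop :=
  ∀ α : Γ, ∀ x ∈ hv.grade α, D x ∈ hv.grade (α + γ)

end HVData

/-!
If `x` has a term `a L_{α,i}` with `(α, i) ≠ (0, 0)`, order the basis vectors `H_{δ,k}` by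
`(φ δ, k)` lexicographically, for an additive `φ : ℂ → ℝ` that separates the grades of `x`, chosen
so that the leading `L`-term `L_{α₀,i₀}` of `x` has positive weight. Then `ad_x` shifts weights by
that of `(α₀, i₀)`, and `(ad_x)ⁿ H_{β,0}` has leading term a nonzero multiple of
`H_{β+nα₀, n i₀}` as soon as no `β + nα₀` vanishes. These infinitely many distinct leading terms
make the orbit of `H_{β,0}` span an infinite-dimensional space.

Conversely `ad L_{0,0}` preserves each finite-dimensional block `span {L_{α,k}, H_{α,k} | k ≤ i}`,
and adding an element `h` of the abelian ideal `H` keeps `ad` locally finite: `ad h` maps everything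
into `H` and kills `H`.
-/

open Submodule Set Function

namespace Module.End

variable {K M : Type*} [Field K] [AddCommGroup M] [Module K M]

def IsLocallyFinite (f : Module.End K M) : Prop :=
  ∀ m : M, FiniteDimensional K (span K (range fun n : ℕ => (f ^ n) m))

variable {f g : Module.End K M}

lemma span_range_pow_apply_mem_invtSubmodule (f : Module.End K M) (m : M) :
    span K (range fun n : ℕ => (f ^ n) m) ∈ f.invtSubmodule := by
  rw [mem_invtSubmodule, span_le]
  rintro _ ⟨n, rfl⟩
  exact subset_span ⟨n + 1, by change (f ^ (n + 1)) m = f ((f ^ n) m); rw [pow_succ', mul_apply]⟩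

lemma span_range_pow_apply_le {U : Submodule K M} (hU : U ∈ f.invtSubmodule) {m : M} (hm : m ∈ U) :
    span K (range fun n : ℕ => (f ^ n) m) ≤ U := by
  rw [span_le]
  rintro _ ⟨n, rfl⟩
  induction n with
  | zero => exact hm
  | succ n ih =>
    change (f ^ (n + 1)) m ∈ U
    rw [pow_succ', mul_apply]
    exact hU ih

lemma isLocallyFinite_iff :
    f.IsLocallyFinite ↔ ∀ m, ∃ U ∈ f.invtSubmodule, FiniteDimensional K U ∧ m ∈ U := by
  refine ⟨fun hf m => ⟨_, span_range_pow_apply_mem_invtSubmodule f m, hf m, subset_span ⟨0, rfl⟩⟩,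
    fun hf m => ?_⟩
  obtain ⟨U, hU, _, hm⟩ := hf m
  exact finiteDimensional_of_le (span_range_pow_apply_le hU hm)

lemma isLocallyFinite_of_span_eq_top {s : Set M} (hs : span K s = ⊤)
    (h : ∀ m ∈ s, ∃ U ∈ f.invtSubmodule, FiniteDimensional K U ∧ m ∈ U) :
    f.IsLocallyFinite := by
  refine isLocallyFinite_iff.mpr fun m => ?_
  induction (hs ▸ mem_top : m ∈ span K s) using span_induction with
  | mem m hm => exact h m hm
  | zero => exact ⟨⊥, invtSubmodule.bot_mem f, inferInstance, zero_mem _⟩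
  | add m m' _ _ ih ih' =>
    obtain ⟨U, hU, _, hm⟩ := ih
    obtain ⟨U', hU', _, hm'⟩ := ih'
    exact ⟨U ⊔ U', invtSubmodule.sup_mem hU hU', inferInstance,
      add_mem_sup hm hm'⟩
  | smul c m _ ih =>
    obtain ⟨U, hU, hfin, hm⟩ := ih
    exact ⟨U, hU, hfin, smul_mem _ c hm⟩

lemma IsLocallyFinite.smul (hf : f.IsLocallyFinite) (c : K) : (c • f).IsLocallyFinite :=
  isLocallyFinite_iff.mpr fun m =>
    let ⟨U, hU, hfin, hm⟩ := isLocallyFinite_iff.mp hf m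
    ⟨U, invtSubmodule_le_invtSubmodule_smul f c hU, hfin, hm⟩

lemma IsLocallyFinite.exists_le_of_fg (hf : f.IsLocallyFinite) {W : Submodule K M} (hW : W.FG) :
    ∃ U ∈ f.invtSubmodule, FiniteDimensional K U ∧ W ≤ U := by
  classical
  obtain ⟨s, rfl⟩ := hW
  induction s using Finset.induction_on with
  | empty => exact ⟨⊥, invtSubmodule.bot_mem f, inferInstance, by simp⟩
  | insert a s _ ih =>
    obtain ⟨U, hU, _, hsU⟩ := ih
    have := hf a
    refine ⟨span K (range fun n => (f ^ n) a) ⊔ U,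
      invtSubmodule.sup_mem (span_range_pow_apply_mem_invtSubmodule f a) hU, inferInstance, ?_⟩
    rw [Finset.coe_insert, span_insert]
    exact sup_le_sup (span_singleton_le_iff_mem _ _ |>.mpr (subset_span ⟨0, rfl⟩)) hsU

lemma IsLocallyFinite.add (hf : f.IsLocallyFinite) {I : Submodule K M}
    (hI : I ∈ f.invtSubmodule) (hgI : LinearMap.range g ≤ I) (hIg : I ≤ LinearMap.ker g) :
    (f + g).IsLocallyFinite := by
  refine isLocallyFinite_iff.mpr fun m => ?_
  obtain ⟨U, hU, hUfin, hm⟩ := isLocallyFinite_iff.mp hf m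
  obtain ⟨U', hU', _, hgU⟩ := hf.exists_le_of_fg ((Module.Finite.iff_fg.mp hUfin).map g)
  have hgUI : U.map g ≤ U' ⊓ I := le_inf hgU (LinearMap.map_le_range.trans hgI)
  refine ⟨U ⊔ U' ⊓ I, ?_, inferInstance, mem_sup_left hm⟩
  rw [mem_invtSubmodule, sup_le_iff]
  constructor
  · intro u hu
    exact add_mem_sup (hU hu) (hgUI (mem_map_of_mem hu))
  · intro u hu
    rw [mem_comap, LinearMap.add_apply, LinearMap.mem_ker.mp (hIg hu.2), add_zero]
    exact mem_sup_right (invtSubmodule.inf_mem hU' hI hu)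

end Module.End

lemma LieAlgebra.isLocallyFinite_ad_add {K L : Type*} [Field K] [LieRing L] [LieAlgebra K L]
    (I : LieIdeal K L) [IsLieAbelian I] {a h : L} (ha : (ad K L a).IsLocallyFinite)
    (hh : h ∈ I) : (ad K L (a + h)).IsLocallyFinite := by
  rw [map_add]
  refine ha.add (I := I.toSubmodule) (fun u hu => I.lie_mem hu) ?_ ?_
  · rintro _ ⟨m, rfl⟩
    exact lie_mem_left K L I h m hh
  · intro u hu
    exact congrArg Subtype.val (trivial_lie_zero I I ⟨h, hh⟩ ⟨u, hu⟩)

theorem Module.Basis.not_finite_span_range {ι κ R M : Type*} [Semiring R] [AddCommMonoid M]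
    [Module R M] [Infinite κ] (b : Module.Basis ι R M) {v : κ → M} {e : κ → ι}
    (he : Function.Injective e) (hv : ∀ k, b.repr (v k) (e k) ≠ 0) :
    ¬ Module.Finite R (span R (range v)) := by
  classical
  intro hfin
  obtain ⟨t, ht⟩ := Module.Finite.iff_fg.mp hfin
  have hle : span R (range v) ≤ span R (b '' ↑(t.biUnion fun u => (b.repr u).support)) := by
    rw [← ht, span_le]
    exact fun u hu => b.mem_span_image.mpr fun i hi => Finset.mem_biUnion.mpr ⟨u, hu, hi⟩
  have hT : ∀ k, e k ∈ t.biUnion fun u => (b.repr u).support := fun k =>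
    b.mem_span_image.mp (hle (subset_span ⟨k, rfl⟩)) (Finsupp.mem_support_iff.mpr (hv k))
  have : Finite κ := _root_.Finite.of_injective (fun k => (⟨e k, hT k⟩ : {i // i ∈ _}))
    fun k k' hkk' => he (congrArg Subtype.val hkk')
  exact not_finite κ

lemma exists_add_nsmul_ne_zero {G : Type*} [AddCommGroup G] [IsAddTorsionFree G] [Nontrivial G]
    (α : G) : ∃ β : G, ∀ n : ℕ, β + n • α ≠ 0 := by
  by_cases hα : α = 0
  · obtain ⟨β, hβ⟩ := exists_ne (0 : G)
    exact ⟨β, by simpa [hα] using hβ⟩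
  · refine ⟨α, fun n => ?_⟩
    rw [← succ_nsmul']
    exact fun h => hα (nsmul_right_injective n.succ_ne_zero (h.trans (nsmul_zero _).symm))

lemma Complex.exists_addMonoidHom_injOn (s : Finset ℂ) : ∃ f : ℂ →+ ℝ, InjOn f s := by
  obtain ⟨t, ht⟩ := Infinite.exists_notMem_finset
    ((s ×ˢ s).image fun z => -(z.1 - z.2).re / (z.1 - z.2).im)
  refine ⟨(reLm + t • imLm).toAddMonoidHom, fun u hu v hv huv => ?_⟩
  simp only [LinearMap.toAddMonoidHom_coe, LinearMap.add_apply, LinearMap.smul_apply, reLm_coe,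
    imLm_coe, smul_eq_mul] at huv
  have hd : (u - v).re + t * (u - v).im = 0 := by
    simp only [sub_re, sub_im]
    linear_combination huv
  by_contra hne
  rcases eq_or_ne (u - v).im 0 with him | him
  · rw [him, mul_zero, add_zero] at hd
    exact hne (sub_eq_zero.mp (Complex.ext hd him))
  · refine ht (Finset.mem_image.mpr ⟨(u, v), Finset.mem_product.mpr ⟨hu, hv⟩, ?_⟩)
    rw [div_eq_iff him]
    linarith

section DegLex

variable {Γ : AddSubgroup ℂ}

def degLex (f : ℂ →+ ℝ) : Γ × ℕ →+ ℝ ×ₗ ℕ where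
  toFun p := toLex (f p.1, p.2)
  map_zero' := by simp
  map_add' p q := by simp only [Prod.fst_add, Prod.snd_add, AddSubgroup.coe_add, map_add]; rfl

@[simp]
lemma degLex_apply (f : ℂ →+ ℝ) (p : Γ × ℕ) : degLex f p = toLex (f p.1, p.2) := rfl

lemma degLex_injOn {f : ℂ →+ ℝ} {P : Finset (Γ × ℕ)}
    (hf : InjOn f (P.image fun p => (p.1 : ℂ))) : InjOn (degLex f) (P : Set (Γ × ℕ)) := by
  intro p hp q hq hpq
  simp only [degLex_apply, EmbeddingLike.apply_eq_iff_eq, Prod.mk.injEq] at hpq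
  exact Prod.ext (Subtype.ext (hf (Finset.mem_image_of_mem _ hp) (Finset.mem_image_of_mem _ hq)
    hpq.1)) hpq.2

lemma exists_degLex_max (P : Finset (Γ × ℕ)) (hP : ¬ P ⊆ {0}) :
    ∃ f : ℂ →+ ℝ, ∃ p₀ ∈ P, 0 < degLex f p₀ ∧ ∀ p ∈ P, p ≠ p₀ → degLex f p < degLex f p₀ := by
  classical
  obtain ⟨p, hp, hp0⟩ := Finset.not_subset.mp hP
  rw [Finset.mem_singleton] at hp0
  suffices ∃ f : ℂ →+ ℝ, InjOn f (P.image fun p => (p.1 : ℂ)) ∧ 0 < degLex f p by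
    obtain ⟨f, hf, hpos⟩ := this
    obtain ⟨p₀, hp₀, hmax⟩ := P.exists_max_image (degLex f) ⟨p, hp⟩
    exact ⟨f, p₀, hp₀, hpos.trans_le (hmax p hp), fun q hq hne =>
      (hmax q hq).lt_of_ne fun h => hne (degLex_injOn hf hq hp₀ h)⟩
  obtain ⟨f, hf⟩ := Complex.exists_addMonoidHom_injOn (insert 0 (P.image fun p => (p.1 : ℂ)))
  have hfP := hf.mono (Finset.coe_subset.mpr (Finset.subset_insert _ _))
  rcases lt_trichotomy (f p.1) 0 with hneg | hzero | hpos
  · refine ⟨-f, fun u hu v hv huv => hfP hu hv (neg_inj.mp huv), ?_⟩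
    exact Prod.Lex.toLex_lt_toLex.mpr (Or.inl (by simpa using hneg))
  · have hp1 : p.1 = 0 := Subtype.ext (hf (Finset.mem_insert_of_mem (Finset.mem_image_of_mem _ hp))
      (Finset.mem_insert_self _ _) (hzero.trans f.map_zero.symm))
    have hp2 : p.2 ≠ 0 := fun h => hp0 (Prod.ext hp1 h)
    exact ⟨f, hfP, Prod.Lex.toLex_lt_toLex.mpr (Or.inr ⟨hzero.symm, Nat.pos_of_ne_zero hp2⟩)⟩
  · exact ⟨f, hfP, Prod.Lex.toLex_lt_toLex.mpr (Or.inl hpos)⟩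

end DegLex

namespace HVData

variable {Γ : AddSubgroup ℂ} {V : Type*} [LieRing V] [LieAlgebra ℂ V] (hv : HVData Γ V)

open LieAlgebra Module.End Finsupp

lemma lie_H_mem_Hspan (q : Γ × ℕ) (x : V) : ⁅hv.H q.1 q.2, x⁆ ∈ hv.Hspan := by
  have : span ℂ (range hv.basis) ≤ hv.Hspan.comap (ad ℂ V (hv.H q.1 q.2)) := by
    rw [span_le]
    rintro _ ⟨p | p, rfl⟩
    · change ⁅_, hv.basis _⁆ ∈ hv.Hspan
      rw [hv.basis_inl, ← lie_skew, hv.lie_L_H]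
      exact neg_mem (add_mem (smul_mem _ _ (subset_span ⟨(_, _), rfl⟩))
        (smul_mem _ _ (subset_span ⟨(_, _), rfl⟩)))
    · change ⁅_, hv.basis _⁆ ∈ hv.Hspan
      rw [hv.basis_inr, hv.lie_H_H]
      exact zero_mem _
  exact this (hv.basis.span_eq ▸ mem_top)

lemma lie_mem_Hspan (x : V) {y : V} (hy : y ∈ hv.Hspan) : ⁅x, y⁆ ∈ hv.Hspan := by
  refine (span_le (p := hv.Hspan.comap (ad ℂ V x))).mpr ?_ hy
  rintro _ ⟨q, rfl⟩
  change ⁅x, _⁆ ∈ hv.Hspan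
  rw [← lie_skew]
  exact neg_mem (hv.lie_H_mem_Hspan q x)

lemma lie_eq_zero_of_mem_Hspan {u w : V} (hu : u ∈ hv.Hspan) (hw : w ∈ hv.Hspan) :
    ⁅u, w⁆ = 0 := by
  have hH : ∀ q : Γ × ℕ, ⁅hv.H q.1 q.2, w⁆ = 0 := fun q =>
    (span_le (p := LinearMap.ker (ad ℂ V (hv.H q.1 q.2)))).mpr
      (by rintro _ ⟨p, rfl⟩; exact hv.lie_H_H _ _ _ _) hw
  have : hv.Hspan ≤ LinearMap.ker (ad ℂ V w) := by
    rw [Hspan, span_le]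
    rintro _ ⟨q, rfl⟩
    change ⁅w, _⁆ = 0
    rw [← lie_skew, hH q, neg_zero]
  rw [← lie_skew, neg_eq_zero]
  exact this hu

noncomputable def Hideal : LieIdeal ℂ V :=
  { hv.Hspan with lie_mem := fun {x _} hy => hv.lie_mem_Hspan x hy }

instance : IsLieAbelian hv.Hideal :=
  ⟨fun u w => Subtype.ext (hv.lie_eq_zero_of_mem_Hspan u.2 w.2)⟩

noncomputable def block (α : Γ) (i : ℕ) : Submodule ℂ V :=
  span ℂ (hv.L α '' Iic i ∪ hv.H α '' Iic i)

lemma block_mem_invtSubmodule (α : Γ) (i : ℕ) :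
    hv.block α i ∈ (ad ℂ V (hv.L 0 0)).invtSubmodule := by
  have hk : ∀ k ∈ Iic i, k - 1 ∈ Iic i := fun k hk => (k.sub_le 1).trans hk
  rw [mem_invtSubmodule, block, span_le]
  rintro _ (⟨k, hki, rfl⟩ | ⟨k, hki, rfl⟩) <;> simp only [SetLike.mem_coe, mem_comap, ad_apply]
  · rw [hv.lie_L_L, zero_add, zero_add]
    exact add_mem (smul_mem _ _ (subset_span (Or.inl ⟨k, hki, rfl⟩)))
      (smul_mem _ _ (subset_span (Or.inl ⟨k - 1, hk k hki, rfl⟩)))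
  · rw [hv.lie_L_H, zero_add, zero_add]
    exact add_mem (smul_mem _ _ (subset_span (Or.inr ⟨k, hki, rfl⟩)))
      (smul_mem _ _ (subset_span (Or.inr ⟨k - 1, hk k hki, rfl⟩)))

lemma isLocallyFinite_ad_L_zero_zero : (ad ℂ V (hv.L 0 0)).IsLocallyFinite := by
  refine isLocallyFinite_of_span_eq_top hv.basis.span_eq ?_
  have hfin : ∀ α i, FiniteDimensional ℂ (hv.block α i) := fun α i =>
    FiniteDimensional.span_of_finite ℂ (((finite_Iic i).image _).union ((finite_Iic i).image _))
  rintro _ ⟨⟨α, i⟩ | ⟨α, i⟩, rfl⟩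
  · exact ⟨hv.block α i, hv.block_mem_invtSubmodule α i, hfin α i,
      hv.basis_inl α i ▸ subset_span (Or.inl ⟨i, Set.mem_Iic.mpr le_rfl, rfl⟩)⟩
  · exact ⟨hv.block α i, hv.block_mem_invtSubmodule α i, hfin α i,
      hv.basis_inr α i ▸ subset_span (Or.inr ⟨i, Set.mem_Iic.mpr le_rfl, rfl⟩)⟩

lemma isLocallyFinite_ad_of_mem {x : V} (hx : x ∈ span ℂ {hv.L 0 0} ⊔ hv.Hspan) :
    (ad ℂ V x).IsLocallyFinite := by
  obtain ⟨_, hu, h, hh, rfl⟩ := mem_sup.mp hx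
  obtain ⟨c, rfl⟩ := mem_span_singleton.mp hu
  refine isLocallyFinite_ad_add hv.Hideal ?_ hh
  rw [map_smul]
  exact hv.isLocallyFinite_ad_L_zero_zero.smul c

lemma exists_eq_linearCombination_add (x : V) :
    ∃ a : Γ × ℕ →₀ ℂ, ∃ h ∈ hv.Hspan, x = linearCombination ℂ (uncurry hv.L) a + h := by
  have hsup : span ℂ (range (uncurry hv.L)) ⊔ hv.Hspan = ⊤ := by
    rw [eq_top_iff, ← hv.basis.span_eq, span_le]
    rintro _ ⟨p | p, rfl⟩
    · rw [hv.basis_inl]; exact mem_sup_left (subset_span ⟨p, rfl⟩)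
    · rw [hv.basis_inr]; exact mem_sup_right (subset_span ⟨p, rfl⟩)
  obtain ⟨y, hy, h, hh, rfl⟩ := mem_sup.mp (hsup ▸ mem_top : x ∈ _)
  rw [← range_linearCombination] at hy
  obtain ⟨a, rfl⟩ := hy
  exact ⟨a, h, hh, rfl⟩

noncomputable def Hbelow (f : ℂ →+ ℝ) (r : ℝ ×ₗ ℕ) : Submodule ℂ V :=
  span ℂ ((fun q : Γ × ℕ => hv.H q.1 q.2) '' {q | degLex f q < r})

variable {hv} {f : ℂ →+ ℝ}

lemma H_mem_Hbelow {q : Γ × ℕ} {r : ℝ ×ₗ ℕ} (hq : degLex f q < r) :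
    hv.H q.1 q.2 ∈ hv.Hbelow f r :=
  subset_span ⟨q, hq, rfl⟩

lemma Hbelow_mono {r r' : ℝ ×ₗ ℕ} (h : r ≤ r') : hv.Hbelow f r ≤ hv.Hbelow f r' :=
  span_mono (image_mono fun _ hq => lt_of_lt_of_le hq h)

lemma repr_inr_of_sub_mem_Hbelow {w : V} {c : ℂ} {q : Γ × ℕ}
    (hw : w - c • hv.H q.1 q.2 ∈ hv.Hbelow f (degLex f q)) :
    hv.basis.repr w (Sum.inr q) = c := by
  have hbelow : hv.Hbelow f (degLex f q)
      = span ℂ (hv.basis '' (Sum.inr '' {q' | degLex f q' < degLex f q})) := by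
    rw [Hbelow, image_image]
    simp_rw [hv.basis_inr]
  rw [hbelow, hv.basis.mem_span_image] at hw
  have h0 : hv.basis.repr (w - c • hv.H q.1 q.2) (Sum.inr q) = 0 := by
    by_contra hne
    obtain ⟨q', hq', hq'q⟩ := hw (Finsupp.mem_support_iff.mpr hne)
    cases Sum.inr_injective hq'q
    exact lt_irrefl (degLex f q) hq'
  rw [map_sub, map_smul, ← hv.basis_inr, hv.basis.repr_self] at h0
  simpa [sub_eq_zero] using h0

lemma lie_L_H_sub_mem_Hbelow (p q : Γ × ℕ) :
    ⁅hv.L p.1 p.2, hv.H q.1 q.2⁆ - (q.1 : ℂ) • hv.H (p.1 + q.1) (p.2 + q.2)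
      ∈ hv.Hbelow f (degLex f (p + q)) := by
  rw [hv.lie_L_H, add_sub_cancel_left]
  rcases Nat.eq_zero_or_pos q.2 with hq | hq
  · rw [hq, Nat.cast_zero, zero_smul]
    exact zero_mem _
  · refine smul_mem _ _ (H_mem_Hbelow (q := (p.1 + q.1, p.2 + q.2 - 1)) ?_)
    exact Prod.Lex.toLex_lt_toLex.mpr (Or.inr ⟨by simp, by simp; omega⟩)

lemma lie_L_H_mem_Hbelow {p q : Γ × ℕ} {r : ℝ ×ₗ ℕ} (h : degLex f (p + q) < r) :
    ⁅hv.L p.1 p.2, hv.H q.1 q.2⁆ ∈ hv.Hbelow f r := by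
  rw [← sub_add_cancel ⁅hv.L p.1 p.2, hv.H q.1 q.2⁆]
  exact add_mem (Hbelow_mono h.le (lie_L_H_sub_mem_Hbelow p q))
    (smul_mem _ _ (H_mem_Hbelow (q := p + q) h))

variable {a : Γ × ℕ →₀ ℂ} {h : V}

lemma lie_linearCombination_add_H (hh : h ∈ hv.Hspan) (q : Γ × ℕ) :
    ⁅linearCombination ℂ (uncurry hv.L) a + h, hv.H q.1 q.2⁆
      = ∑ p ∈ a.support, a p • ⁅hv.L p.1 p.2, hv.H q.1 q.2⁆ := by
  rw [add_lie, hv.lie_eq_zero_of_mem_Hspan hh (subset_span ⟨q, rfl⟩), add_zero,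
    linearCombination_apply, Finsupp.sum, sum_lie]
  simp_rw [smul_lie]
  rfl

variable {p₀ : Γ × ℕ}

lemma lie_mem_Hbelow (hh : h ∈ hv.Hspan) (hmax : ∀ p ∈ a.support, degLex f p ≤ degLex f p₀)
    {r : ℝ ×ₗ ℕ} {w : V} (hw : w ∈ hv.Hbelow f r) :
    ⁅linearCombination ℂ (uncurry hv.L) a + h, w⁆ ∈ hv.Hbelow f (degLex f p₀ + r) := by
  refine (span_le (p := (hv.Hbelow f _).comap (ad ℂ V _))).mpr ?_ hw
  rintro _ ⟨q, hq, rfl⟩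
  change ⁅_, _⁆ ∈ hv.Hbelow f _
  rw [lie_linearCombination_add_H hh]
  refine sum_mem fun p hp => smul_mem _ _ (lie_L_H_mem_Hbelow ?_)
  rw [map_add]
  exact add_lt_add_of_le_of_lt (hmax p hp) hq

lemma lie_H_sub_mem_Hbelow (hh : h ∈ hv.Hspan) (hp₀ : p₀ ∈ a.support)
    (hmax : ∀ p ∈ a.support, p ≠ p₀ → degLex f p < degLex f p₀) (q : Γ × ℕ) :
    ⁅linearCombination ℂ (uncurry hv.L) a + h, hv.H q.1 q.2⁆
        - (a p₀ * q.1) • hv.H (p₀.1 + q.1) (p₀.2 + q.2)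
      ∈ hv.Hbelow f (degLex f (p₀ + q)) := by
  classical
  rw [lie_linearCombination_add_H hh, ← Finset.add_sum_erase _ _ hp₀, add_sub_right_comm,
    mul_smul, ← smul_sub]
  refine add_mem (smul_mem _ _ (lie_L_H_sub_mem_Hbelow p₀ q)) (sum_mem fun p hp => ?_)
  refine smul_mem _ _ (lie_L_H_mem_Hbelow ?_)
  rw [map_add, map_add]
  exact add_lt_add_left (hmax p (Finset.mem_of_mem_erase hp) (Finset.ne_of_mem_erase hp)) _

lemma exists_pow_ad_H_sub_mem_Hbelow (hh : h ∈ hv.Hspan) (hp₀ : p₀ ∈ a.support)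
    (hmax : ∀ p ∈ a.support, p ≠ p₀ → degLex f p < degLex f p₀) {β : Γ}
    (hβ : ∀ n : ℕ, β + n • p₀.1 ≠ 0) (n : ℕ) :
    ∃ c : ℂ, c ≠ 0 ∧ (ad ℂ V (linearCombination ℂ (uncurry hv.L) a + h) ^ n) (hv.H β 0)
      - c • hv.H ((β, 0) + n • p₀).1 ((β, 0) + n • p₀).2
      ∈ hv.Hbelow f (degLex f ((β, 0) + n • p₀)) := by
  induction n with
  | zero => exact ⟨1, one_ne_zero, by simp⟩
  | succ n ih =>
    obtain ⟨c, hc, hz⟩ := ih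
    set x := linearCombination ℂ (uncurry hv.L) a + h
    set e := ((β, 0) + n • p₀ : Γ × ℕ)
    have he : (β, 0) + (n + 1) • p₀ = p₀ + e := by rw [succ_nsmul', add_left_comm]
    have he1 : (e.1 : ℂ) ≠ 0 := by
      rw [Ne, ZeroMemClass.coe_eq_zero]
      exact hβ n
    refine ⟨c * (a p₀ * e.1), mul_ne_zero hc (mul_ne_zero (Finsupp.mem_support_iff.mp hp₀) he1), ?_⟩
    have hstep : (ad ℂ V x ^ (n + 1)) (hv.H β 0)
        = c • ⁅x, hv.H e.1 e.2⁆ + ⁅x, (ad ℂ V x ^ n) (hv.H β 0) - c • hv.H e.1 e.2⁆ := by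
      rw [pow_succ', Module.End.mul_apply, ad_apply, lie_sub, lie_smul, add_sub_cancel]
    rw [he, hstep, mul_smul, add_sub_right_comm, ← smul_sub]
    refine add_mem (smul_mem _ _ (lie_H_sub_mem_Hbelow hh hp₀ hmax e)) ?_
    have hle : ∀ p ∈ a.support, degLex f p ≤ degLex f p₀ := fun p hp => by
      rcases eq_or_ne p p₀ with rfl | hne
      exacts [le_rfl, (hmax p hp hne).le]
    rw [map_add]
    exact lie_mem_Hbelow hh hle hz

variable (hv)

lemma not_isLocallyFinite_ad (hΓ : Γ ≠ ⊥) (hh : h ∈ hv.Hspan) (ha : ¬ a.support ⊆ {0}) :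
    ¬ (ad ℂ V (linearCombination ℂ (uncurry hv.L) a + h)).IsLocallyFinite := by
  obtain ⟨f, p₀, hp₀, hpos, hmax⟩ := exists_degLex_max a.support ha
  have : Nontrivial Γ := (AddSubgroup.nontrivial_iff_ne_bot Γ).mpr hΓ
  obtain ⟨β, hβ⟩ := exists_add_nsmul_ne_zero p₀.1
  choose c hc hz using exists_pow_ad_H_sub_mem_Hbelow hh hp₀ hmax hβ
  have hmono : StrictMono fun n : ℕ => degLex f ((β, 0) + n • p₀) := fun m n hmn => by
    simp only [map_add, map_nsmul]
    exact add_lt_add_right (nsmul_lt_nsmul_left hpos hmn) _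
  intro hfin
  refine hv.basis.not_finite_span_range (e := fun n => Sum.inr ((β, 0) + n • p₀))
    (fun m n hmn => hmono.injective (congrArg _ (Sum.inr_injective hmn)))
    (fun n => ?_) (hfin (hv.H β 0))
  rw [repr_inr_of_sub_mem_Hbelow (hz n)]
  exact hc n

lemma mem_of_isLocallyFinite_ad (hΓ : Γ ≠ ⊥) {x : V} (hx : (ad ℂ V x).IsLocallyFinite) :
    x ∈ span ℂ {hv.L 0 0} ⊔ hv.Hspan := by
  obtain ⟨a, h, hh, rfl⟩ := hv.exists_eq_linearCombination_add x
  have ha : a.support ⊆ {0} := by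
    by_contra ha
    exact hv.not_isLocallyFinite_ad hΓ hh ha hx
  rw [linearCombination_apply, Finsupp.sum_of_support_subset a ha _ (by simp),
    Finset.sum_singleton]
  exact add_mem_sup (smul_mem _ _ (mem_span_singleton_self _)) hh

end HVData

/-- The set of ad-locally finite elements of `HV` is exactly
`ℂ L_{0,0} + H`. -/
theorem HV_ad_locally_finite_elements (Γ : AddSubgroup ℂ) (hΓ : Γ ≠ ⊥)
    {V : Type*} [LieRing V] [LieAlgebra ℂ V] (hv : HVData Γ V) :
    {x : V | ∀ y : V, FiniteDimensional ℂ (Submodule.span ℂ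
        (Set.range fun n : ℕ => ((LieAlgebra.ad ℂ V x) ^ n) y))}
      = ((Submodule.span ℂ {hv.L 0 0} ⊔ hv.Hspan : Submodule ℂ V) : Set V) :=
  Set.ext fun _ => ⟨hv.mem_of_isLocallyFinite_ad hΓ, hv.isLocallyFinite_ad_of_mem⟩
end

section
/- For every derivation D of HV there exists an element u ∈ HV such that (D − ad_u)(L_{0,0}) = 0. -/
/-!
Every element of `HV` lies in the image of `ad_{L_{0,0}}`, so `u` can be chosen with
`⁅u, L_{0,0}⁆ = D L_{0,0}`. Indeed `ad_{L_{0,0}}` acts on `L_{α,i}` (and likewise on `H_{α,i}`)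
as `α + ∂`, where `∂` lowers the index `i`. For `α ≠ 0` this is invertible by induction on `i`;
for `α = 0` it is `∂`, which is onto because `∂ L_{0,i+1} = (i+1) L_{0,i}`.
-/

section LoweringChain

variable {K M : Type*} [Field K] [CharZero K] [AddCommGroup M] [Module K M]

theorem LinearMap.mem_range_of_apply_eq_smul_add_smul_pred {T : M →ₗ[K] M} {c : K}
    {e : ℕ → M} (hT : ∀ i, T (e i) = c • e i + (i : K) • e (i - 1)) (i : ℕ) :
    e i ∈ LinearMap.range T := by
  rcases eq_or_ne c 0 with rfl | hc
  · refine ⟨((i : K) + 1)⁻¹ • e (i + 1), ?_⟩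
    rw [map_smul, hT]
    simp [smul_smul, Nat.cast_add_one_ne_zero]
  · induction i with
    | zero => exact ⟨c⁻¹ • e 0, by simp [hT, smul_smul, hc]⟩
    | succ i ih =>
      have hsolve : e (i + 1) = c⁻¹ • (T (e (i + 1)) - ((i : K) + 1) • e i) := by
        rw [hT]
        simp [smul_smul, hc]
      rw [hsolve]
      exact Submodule.smul_mem _ _
        (Submodule.sub_mem _ (LinearMap.mem_range_self _ _) (Submodule.smul_mem _ _ ih))

end LoweringChain

namespace HVData

variable {Γ : AddSubgroup ℂ} {V : Type*} [LieRing V] [LieAlgebra ℂ V] (hv : HVData Γ V)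

theorem lie_L_zero_zero_L (α : Γ) (i : ℕ) :
    ⁅hv.L 0 0, hv.L α i⁆ = (α : ℂ) • hv.L α i + (i : ℂ) • hv.L α (i - 1) := by
  simp [hv.lie_L_L]

theorem lie_L_zero_zero_H (α : Γ) (i : ℕ) :
    ⁅hv.L 0 0, hv.H α i⁆ = (α : ℂ) • hv.H α i + (i : ℂ) • hv.H α (i - 1) := by
  simp [hv.lie_L_H]

theorem range_ad_L_zero_zero : LinearMap.range (LieAlgebra.ad ℂ V (hv.L 0 0)) = ⊤ := by
  rw [eq_top_iff, ← hv.basis.span_eq, Submodule.span_le]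
  rintro _ ⟨⟨α, i⟩ | ⟨α, i⟩, rfl⟩
  · rw [hv.basis_inl]
    exact LinearMap.mem_range_of_apply_eq_smul_add_smul_pred (hv.lie_L_zero_zero_L α) i
  · rw [hv.basis_inr]
    exact LinearMap.mem_range_of_apply_eq_smul_add_smul_pred (hv.lie_L_zero_zero_H α) i

end HVData

theorem HV_derivation_kills_L00_general (Γ : AddSubgroup ℂ)
    {V : Type*} [LieRing V] [LieAlgebra ℂ V] (hv : HVData Γ V)
    (D : LieDerivation ℂ V V) :
    ∃ u : V, D (hv.L 0 0) - ⁅u, hv.L 0 0⁆ = 0 := by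
  obtain ⟨u, hu⟩ : D (hv.L 0 0) ∈ LinearMap.range (LieAlgebra.ad ℂ V (hv.L 0 0)) := by
    rw [hv.range_ad_L_zero_zero]
    exact Submodule.mem_top
  refine ⟨-u, ?_⟩
  rw [← hu, LieAlgebra.ad_apply, neg_lie, ← lie_skew, sub_self]

/-- For every derivation `D` of `HV` there is `u ∈ HV` with
`(D - ad_u)(L_{0,0}) = 0`. -/
theorem HV_derivation_kills_L00 (Γ : AddSubgroup ℂ) (hΓ : Γ ≠ ⊥)
    {V : Type*} [LieRing V] [LieAlgebra ℂ V] (hv : HVData Γ V)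
    (D : LieDerivation ℂ V V) :
    ∃ u : V, D (hv.L 0 0) - ⁅u, hv.L 0 0⁆ = 0 :=
  HV_derivation_kills_L00_general Γ hv D
end

section
/- Assume 1 ∈ Γ. Let D be a derivation of HV of degree 0 with D(L_{0,0}) = 0. Then there exist an additive group homomorphism b: Γ → ℂ and constants d₁, f₀ ∈ ℂ such that for all α ∈ Γ: (i) D(L_{α,0}) = b(α) L_{α,0} + α d₁ H_{α,0}, and (ii) D(H_{α,0}) = (b(α) + f₀) H_{α,0}. -/
theorem apply_add_of_apply_add_of_ne {G M : Type*} [AddCommGroup G] [IsAddTorsionFree G]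
    [AddCommGroup M] {f : G → M} (h0 : f 0 = 0) (hf : ∀ x y, x ≠ y → f (x + y) = f x + f y)
    (x y : G) : f (x + y) = f x + f y := by
  rcases ne_or_eq x y with hxy | rfl
  · exact hf x y hxy
  rcases eq_or_ne x 0 with rfl | hx
  · simp [h0]
  have hmul : ∀ m n : ℤ, m ≠ n → f ((m + n) • x) = f (m • x) + f (n • x) := fun m n hmn => by
    rw [add_zsmul]
    exact hf _ _ fun h => hmn ((smul_left_inj hx).mp h)
  have h5 := hmul 1 4 (by norm_num)
  have h4 := hmul 1 3 (by norm_num)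
  have h5' := hmul 2 3 (by norm_num)
  norm_num only [one_zsmul] at h5 h4 h5'
  rw [← two_zsmul]
  linear_combination (norm := abel) h5 - h5' + h4

section FunctionalEquations

variable {Γ : AddSubgroup ℂ} [Nontrivial Γ]

theorem exists_eq_coe_mul_of_sub_mul_add {c : Γ → ℂ} (h0 : c 0 = 0)
    (hc : ∀ α β : Γ, ((β : ℂ) - α) * c (α + β) = β * c β - α * c α) :
    ∃ d : ℂ, ∀ γ : Γ, c γ = γ * d := by
  have hneg : ∀ β : Γ, c (-β) = -c β := fun β => by
    rcases eq_or_ne β 0 with rfl | hβ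
    · simp [h0]
    have hβ' : (β : ℂ) ≠ 0 := by simpa using hβ
    have h := hc β (-β)
    rw [add_neg_cancel, h0, mul_zero, AddSubgroup.coe_neg] at h
    exact mul_left_cancel₀ hβ' (by linear_combination h)
  have hratio : ∀ α β : Γ, ((α : ℂ) + β) * c α = α * c (α + β) := fun α β => by
    have h := hc (α + β) (-β)
    rw [add_neg_cancel_right, hneg] at h
    push_cast at h
    linear_combination (hc α β - h) / 2
  obtain ⟨x, hx⟩ := exists_ne (0 : Γ)
  have hx' : (x : ℂ) ≠ 0 := by simpa using hx
  refine ⟨c x / x, fun γ => ?_⟩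
  have h := hratio x (γ - x)
  rw [add_sub_cancel] at h
  push_cast at h
  field_simp
  linear_combination -h

theorem eq_zero_of_mul_apply_add {e : Γ → ℂ}
    (he : ∀ α β : Γ, (β : ℂ) * e (α + β) = (β - α) * e β)
    (he' : ∀ α β : Γ, (β : ℂ) * e α = α * e β) : e = 0 := by
  obtain ⟨x, hx⟩ := exists_ne (0 : Γ)
  have hx' : (x : ℂ) ≠ 0 := by simpa using hx
  have h2 : e (x + x) = 0 := by simpa [hx'] using he x x
  have h1 : e x = 0 := by
    have h := he' x (x + x)
    rw [h2, mul_zero] at h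
    push_cast at h
    simpa [hx'] using h
  funext γ
  simpa [h1, hx'] using he' γ x

theorem exists_eq_add_const {f : Γ → ℂ} (b : Γ →+ ℂ)
    (hf : ∀ α β : Γ, (β : ℂ) * f (α + β) = β * (b α + f β)) :
    ∃ f₀ : ℂ, ∀ γ : Γ, f γ = b γ + f₀ := by
  obtain ⟨x, hx⟩ := exists_ne (0 : Γ)
  have hx' : (x : ℂ) ≠ 0 := by simpa using hx
  refine ⟨f x - b x, fun γ => ?_⟩
  have h := mul_left_cancel₀ hx' (hf (γ - x) x)
  rw [sub_add_cancel, map_sub] at h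
  linear_combination h

end FunctionalEquations

namespace HVData

variable {Γ : AddSubgroup ℂ} {V : Type*} [LieRing V] [LieAlgebra ℂ V] (hv : HVData Γ V)

theorem L_mem_grade (α : Γ) (i : ℕ) : hv.L α i ∈ hv.grade α :=
  Submodule.subset_span (.inl ⟨i, rfl⟩)

theorem H_mem_grade (α : Γ) (i : ℕ) : hv.H α i ∈ hv.grade α :=
  Submodule.subset_span (.inr ⟨i, rfl⟩)

def basisDegree : (Γ × ℕ) ⊕ (Γ × ℕ) → Γ := Sum.elim Prod.fst Prod.fst

theorem grade_eq_span_basis (α : Γ) :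
    hv.grade α = Submodule.span ℂ (hv.basis '' (basisDegree ⁻¹' {α})) := by
  rw [grade]
  congr 1
  ext x
  simp [basisDegree, hv.basis_inl, hv.basis_inr]

@[simp]
theorem repr_L (α : Γ) (i : ℕ) : hv.basis.repr (hv.L α i) = Finsupp.single (.inl (α, i)) 1 := by
  rw [← hv.basis_inl, Module.Basis.repr_self]

@[simp]
theorem repr_H (α : Γ) (i : ℕ) : hv.basis.repr (hv.H α i) = Finsupp.single (.inr (α, i)) 1 := by
  rw [← hv.basis_inr, Module.Basis.repr_self]

theorem repr_lie_L_zero_zero_inl (x : V) (γ : Γ) (n : ℕ) :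
    hv.basis.repr ⁅hv.L 0 0, x⁆ (.inl (γ, n)) =
      γ * hv.basis.repr x (.inl (γ, n)) + (n + 1) * hv.basis.repr x (.inl (γ, n + 1)) := by
  classical
  have key : Finsupp.lapply (.inl (γ, n)) ∘ₗ hv.basis.repr.toLinearMap ∘ₗ
        LieAlgebra.ad ℂ V (hv.L 0 0) =
      (γ : ℂ) • (Finsupp.lapply (.inl (γ, n)) ∘ₗ hv.basis.repr.toLinearMap)
        + ((n : ℂ) + 1) • (Finsupp.lapply (.inl (γ, n + 1)) ∘ₗ hv.basis.repr.toLinearMap) := by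
    refine hv.basis.ext fun j => ?_
    rcases j with ⟨β, i⟩ | ⟨β, i⟩
    · obtain rfl | hβ := eq_or_ne β γ
      · rcases i with _ | i <;> simp +contextual [hv.basis_inl, hv.lie_L_L, Finsupp.single_apply,
          ite_add_ite]
      · simp [hv.basis_inl, hv.lie_L_L, hβ]
    · simp [hv.basis_inr, hv.lie_L_H]
  simpa using LinearMap.congr_fun key x

theorem repr_lie_L_zero_zero_inr (x : V) (γ : Γ) (n : ℕ) :
    hv.basis.repr ⁅hv.L 0 0, x⁆ (.inr (γ, n)) =
      γ * hv.basis.repr x (.inr (γ, n)) + (n + 1) * hv.basis.repr x (.inr (γ, n + 1)) := by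
  classical
  have key : Finsupp.lapply (.inr (γ, n)) ∘ₗ hv.basis.repr.toLinearMap ∘ₗ
        LieAlgebra.ad ℂ V (hv.L 0 0) =
      (γ : ℂ) • (Finsupp.lapply (.inr (γ, n)) ∘ₗ hv.basis.repr.toLinearMap)
        + ((n : ℂ) + 1) • (Finsupp.lapply (.inr (γ, n + 1)) ∘ₗ hv.basis.repr.toLinearMap) := by
    refine hv.basis.ext fun j => ?_
    rcases j with ⟨β, i⟩ | ⟨β, i⟩
    · simp [hv.basis_inl, hv.lie_L_L]
    · obtain rfl | hβ := eq_or_ne β γ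
      · rcases i with _ | i <;> simp +contextual [hv.basis_inr, hv.lie_L_H, Finsupp.single_apply,
          ite_add_ite]
      · simp [hv.basis_inr, hv.lie_L_H, hβ]
  simpa using LinearMap.congr_fun key x

theorem mem_span_pair_of_lie_L_zero_zero_eq {γ : Γ} {x : V} (hx : x ∈ hv.grade γ)
    (h : ⁅hv.L 0 0, x⁆ = (γ : ℂ) • x) :
    x ∈ Submodule.span ℂ {hv.L γ 0, hv.H γ 0} := by
  rw [grade_eq_span_basis, Module.Basis.mem_span_image] at hx
  have hpair : ({hv.L γ 0, hv.H γ 0} : Set V) = hv.basis '' {.inl (γ, 0), .inr (γ, 0)} := by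
    simp [Set.image_pair, hv.basis_inl, hv.basis_inr]
  rw [hpair, Module.Basis.mem_span_image]
  rintro j hj
  have hjγ : basisDegree j = γ := hx hj
  rw [Finset.mem_coe, Finsupp.mem_support_iff] at hj
  rcases j with ⟨β, _ | n⟩ | ⟨β, _ | n⟩
  · simp_all [basisDegree]
  · simp only [basisDegree, Sum.elim_inl] at hjγ
    subst hjγ
    refine (hj ?_).elim
    simpa [h, Nat.cast_add_one_ne_zero] using hv.repr_lie_L_zero_zero_inl x β n
  · simp_all [basisDegree]
  · simp only [basisDegree, Sum.elim_inr] at hjγ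
    subst hjγ
    refine (hj ?_).elim
    simpa [h, Nat.cast_add_one_ne_zero] using hv.repr_lie_L_zero_zero_inr x β n

theorem lie_L_zero_L_zero (α β : Γ) :
    ⁅hv.L α 0, hv.L β 0⁆ = ((β : ℂ) - α) • hv.L (α + β) 0 := by
  simp [hv.lie_L_L]

theorem lie_L_zero_H_zero (α β : Γ) : ⁅hv.L α 0, hv.H β 0⁆ = (β : ℂ) • hv.H (α + β) 0 := by
  simp [hv.lie_L_H]

theorem lie_H_zero_L_zero (α β : Γ) : ⁅hv.H α 0, hv.L β 0⁆ = -((α : ℂ) • hv.H (α + β) 0) := by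
  rw [← lie_skew, lie_L_zero_H_zero, add_comm]

theorem linearIndependent_L_zero_H_zero (γ : Γ) :
    LinearIndependent ℂ ![hv.L γ 0, hv.H γ 0] := by
  have h := hv.basis.linearIndependent.comp ![.inl (γ, 0), .inr (γ, 0)] fun i j => by
    fin_cases i <;> fin_cases j <;> simp
  convert h using 1
  ext i
  fin_cases i <;> simp [hv.basis_inl, hv.basis_inr]

section Derivation

variable {hv} {D : LieDerivation ℂ V V}

theorem derivation_mem_span_pair (hdeg : hv.HasDegree D 0) (h0 : D (hv.L 0 0) = 0) {γ : Γ}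
    {x : V} (hx : x ∈ hv.grade γ) (h : ⁅hv.L 0 0, x⁆ = (γ : ℂ) • x) :
    D x ∈ Submodule.span ℂ {hv.L γ 0, hv.H γ 0} := by
  refine hv.mem_span_pair_of_lie_L_zero_zero_eq (by simpa using hdeg γ x hx) ?_
  simpa [h0, h] using (D.apply_lie_eq_add (hv.L 0 0) x).symm

theorem exists_derivation_L_zero_eq (hdeg : hv.HasDegree D 0) (h0 : D (hv.L 0 0) = 0) :
    ∃ a c : Γ → ℂ, ∀ γ, D (hv.L γ 0) = a γ • hv.L γ 0 + c γ • hv.H γ 0 := by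
  have h γ := Submodule.mem_span_pair.mp <| derivation_mem_span_pair hdeg h0
    (hv.L_mem_grade γ 0) (by simpa using hv.lie_L_zero_L_zero 0 γ)
  choose a c h using h
  exact ⟨a, c, fun γ => (h γ).symm⟩

theorem exists_derivation_H_zero_eq (hdeg : hv.HasDegree D 0) (h0 : D (hv.L 0 0) = 0) :
    ∃ e f : Γ → ℂ, ∀ γ, D (hv.H γ 0) = e γ • hv.L γ 0 + f γ • hv.H γ 0 := by
  have h γ := Submodule.mem_span_pair.mp <| derivation_mem_span_pair hdeg h0
    (hv.H_mem_grade γ 0) (by simpa using hv.lie_L_zero_H_zero 0 γ)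
  choose e f h using h
  exact ⟨e, f, fun γ => (h γ).symm⟩

variable {a c e f : Γ → ℂ}
  (hDL : ∀ γ, D (hv.L γ 0) = a γ • hv.L γ 0 + c γ • hv.H γ 0)
  (hDH : ∀ γ, D (hv.H γ 0) = e γ • hv.L γ 0 + f γ • hv.H γ 0)
include hDL

theorem coeff_lie_L_L (α β : Γ) :
    ((β : ℂ) - α) * a (α + β) = (β - α) * (a α + a β) ∧
      ((β : ℂ) - α) * c (α + β) = β * c β - α * c α := by
  have h := D.apply_lie_eq_add (hv.L α 0) (hv.L β 0)
  simp only [lie_L_zero_L_zero, map_smul, hDL, lie_add, add_lie, lie_smul, smul_lie,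
    lie_L_zero_H_zero, lie_H_zero_L_zero] at h
  refine (hv.linearIndependent_L_zero_H_zero (α + β)).eq_of_pair ?_
  linear_combination (norm := module) h

include hDH in
theorem coeff_lie_L_H (α β : Γ) :
    (β : ℂ) * e (α + β) = (β - α) * e β ∧ (β : ℂ) * f (α + β) = β * (a α + f β) := by
  have h := D.apply_lie_eq_add (hv.L α 0) (hv.H β 0)
  simp only [lie_L_zero_H_zero, map_smul, hDL, hDH, lie_add, add_lie, lie_smul, smul_lie,
    lie_L_zero_L_zero, hv.lie_H_H] at h
  refine (hv.linearIndependent_L_zero_H_zero (α + β)).eq_of_pair ?_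
  linear_combination (norm := module) h

omit hDL in
include hDH in
theorem coeff_lie_H_H (α β : Γ) : (β : ℂ) * e α = α * e β := by
  have h := D.apply_lie_eq_add (hv.H α 0) (hv.H β 0)
  simp only [hv.lie_H_H, map_zero, hDH, lie_add, add_lie, lie_smul, smul_lie,
    lie_L_zero_H_zero, lie_H_zero_L_zero] at h
  refine ((hv.linearIndependent_L_zero_H_zero (α + β)).eq_of_pair (s := 0) (s' := 0) ?_).2
  linear_combination (norm := module) -h

end Derivation

end HVData

theorem HV_degree_zero_derivation_on_L0_H0_general (Γ : AddSubgroup ℂ) (hΓ : Γ ≠ ⊥)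
    {V : Type*} [LieRing V] [LieAlgebra ℂ V] (hv : HVData Γ V)
    (D : LieDerivation ℂ V V) (hdeg : hv.HasDegree D 0) (h0 : D (hv.L 0 0) = 0) :
    ∃ (b : ↥Γ →+ ℂ) (d₁ f₀ : ℂ), ∀ α : Γ,
      D (hv.L α 0) = b α • hv.L α 0 + ((α : ℂ) * d₁) • hv.H α 0 ∧
      D (hv.H α 0) = (b α + f₀) • hv.H α 0 := by
  have : Nontrivial Γ := (AddSubgroup.nontrivial_iff_ne_bot Γ).mpr hΓ
  obtain ⟨a, c, hDL⟩ := HVData.exists_derivation_L_zero_eq hdeg h0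
  obtain ⟨e, f, hDH⟩ := HVData.exists_derivation_H_zero_eq hdeg h0
  obtain ⟨ha0, hc0⟩ : 0 = a 0 ∧ 0 = c 0 :=
    (hv.linearIndependent_L_zero_H_zero 0).eq_of_pair (by rw [← hDL, h0]; simp)
  have hLL := HVData.coeff_lie_L_L hDL
  have hLH := HVData.coeff_lie_L_H hDL hDH
  let b : Γ →+ ℂ := AddMonoidHom.mk' a <| apply_add_of_apply_add_of_ne ha0.symm fun α β hαβ =>
    mul_left_cancel₀ (sub_ne_zero.mpr (Subtype.coe_injective.ne hαβ.symm)) (hLL α β).1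
  obtain ⟨d₁, hc⟩ := exists_eq_coe_mul_of_sub_mul_add hc0.symm fun α β => (hLL α β).2
  have he := eq_zero_of_mul_apply_add (fun α β => (hLH α β).1) (HVData.coeff_lie_H_H hDH)
  obtain ⟨f₀, hf⟩ := exists_eq_add_const b fun α β => (hLH α β).2
  refine ⟨b, d₁, f₀, fun α => ⟨?_, ?_⟩⟩
  · rw [hDL, hc]
    rfl
  · rw [hDH, he, hf]
    simp

/-- Assume `1 ∈ Γ`. If `D` is a degree-0 derivation of `HV` with
`D(L_{0,0}) = 0`, then there are an additive homomorphism `b : Γ → ℂ` and constants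
`d₁, f₀ ∈ ℂ` with `D(L_{α,0}) = b(α) L_{α,0} + α d₁ H_{α,0}` and
`D(H_{α,0}) = (b(α) + f₀) H_{α,0}` for all `α ∈ Γ`. -/
theorem HV_degree_zero_derivation_on_L0_H0 (Γ : AddSubgroup ℂ) (hΓ : Γ ≠ ⊥)
    (h1 : (1 : ℂ) ∈ Γ)
    {V : Type*} [LieRing V] [LieAlgebra ℂ V] (hv : HVData Γ V)
    (D : LieDerivation ℂ V V) (hdeg : hv.HasDegree D 0) (h0 : D (hv.L 0 0) = 0) :
    ∃ (b : ↥Γ →+ ℂ) (d₁ f₀ : ℂ), ∀ α : Γ,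
      D (hv.L α 0) = b α • hv.L α 0 + ((α : ℂ) * d₁) • hv.H α 0 ∧
      D (hv.H α 0) = (b α + f₀) • hv.H α 0 :=
  HV_degree_zero_derivation_on_L0_H0_general Γ hΓ hv D hdeg h0
end

section
/- Let σ be a Lie algebra automorphism of W and c ∈ ℂ* with σ(L_{0,0}) = c⁻¹ L_{0,0}. Then cΓ ⊆ Γ and there exists a character τ: Γ → ℂ* such that σ(L_{α,0}) = c⁻¹ τ(α) L_{cα,0} for all α ∈ Γ. -/
/-- The generalized Witt algebra `W(Γ)`: a complex Lie algebra `V` equipped with a basis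
`{L_{α,i} | α ∈ Γ, i ∈ ℤ₊}` satisfying the defining bracket relation. -/
structure WData (Γ : AddSubgroup ℂ) (V : Type*) [LieRing V] [LieAlgebra ℂ V] where
  L : Γ → ℕ → V
  basis : Module.Basis (↥Γ × ℕ) ℂ V
  basis_eq : ∀ (α : Γ) (i : ℕ), basis (α, i) = L α i
  lie_L_L : ∀ (α β : Γ) (i j : ℕ),
    ⁅L α i, L β j⁆ = ((β : ℂ) - (α : ℂ)) • L (α + β) (i + j)
      + ((j : ℂ) - (i : ℂ)) • L (α + β) (i + j - 1)

/-- The value in `ℂ` of a character `τ : Γ → ℂ*` at `α ∈ Γ`. -/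
noncomputable def charVal {Γ : AddSubgroup ℂ} (τ : Multiplicative ↥Γ →* ℂˣ) (α : Γ) : ℂ :=
  (τ (Multiplicative.ofAdd α) : ℂ)

/-!
The eigenvectors of `ad L_{0,0}` in `W(Γ)` are exactly the nonzero multiples of the `L_{μ,0}`
(eigenvalue `μ`): in coordinates, `⁅L_{0,0}, x⁆ = μ x` reads
`(β - μ) x_{β,j} + (j + 1) x_{β,j+1} = 0`, and since `x` has finite support this forces
`x_{β,j} = 0` unless `β = μ` and `j = 0`. Since `σ(L_{0,0}) = c⁻¹ L_{0,0}`, `σ` maps eigenvectors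
of eigenvalue `α` to eigenvectors of eigenvalue `cα`, so `cα ∈ Γ` and
`σ(L_{α,0}) = f(α) L_{cα,0}`. Applying `σ` to `⁅L_{α,0}, L_{β,0}⁆ = (β - α) L_{α+β,0}` shows that
`τ = c f` is multiplicative on pairs `α ≠ β`, and the diagonal case follows by writing
`2α = (α + γ) + (α - γ)` for a suitable `γ`.
-/

theorem exists_ne_neg_ne_ne_neg {G : Type*} [AddCommGroup G] [IsAddTorsionFree G] [Nontrivial G]
    (a : G) : ∃ g : G, g ≠ -g ∧ a ≠ g ∧ a ≠ -g := by
  obtain ⟨g, hg⟩ := exists_ne (0 : G)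
  by_cases ha : a ≠ g ∧ a ≠ -g
  · exact ⟨g, self_ne_neg.2 hg, ha⟩
  · refine ⟨2 • g, ?_, ?_, ?_⟩ <;> grind

theorem map_add_of_map_add_of_ne {G M : Type*} [AddCommGroup G] [IsAddTorsionFree G]
    [Nontrivial G] [CommMonoid M] {g : G → M} (h0 : g 0 = 1)
    (hne : ∀ a b, a ≠ b → g (a + b) = g a * g b) (a b : G) : g (a + b) = g a * g b := by
  rcases ne_or_eq a b with hab | rfl
  · exact hne a b hab
  obtain ⟨γ, hγ, haγ, haγ'⟩ := exists_ne_neg_ne_ne_neg a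
  calc g (a + a) = g ((a + γ) + (a + -γ)) := by congr 1; abel
    _ = g a * g a * (g γ * g (-γ)) := by
      rw [hne (a + γ) (a + -γ) (by simpa using hγ), hne a γ haγ, hne a (-γ) haγ']
      exact mul_mul_mul_comm _ _ _ _
    _ = g a * g a := by rw [← hne γ (-γ) hγ, add_neg_cancel, h0, mul_one]

theorem eq_zero_of_hasFiniteSupport_of_succ_eq_zero {M : Type*} [Zero M] {u : ℕ → M}
    (hu : u.HasFiniteSupport) (hsucc : ∀ j, u (j + 1) = 0 → u j = 0) (j : ℕ) : u j = 0 := by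
  by_contra hj
  obtain ⟨m, hm, hmax⟩ := Set.Finite.exists_maximal hu ⟨j, hj⟩
  exact hm (hsucc m (by_contra fun h => by simpa using hmax h m.le_succ))

theorem LieHom.lie_apply_eq_smul_of_apply_eq_smul {K L L' : Type*} [Field K] [LieRing L]
    [LieAlgebra K L] [LieRing L'] [LieAlgebra K L'] (σ : L →ₗ⁅K⁆ L') {c μ : K} (hc : c ≠ 0)
    {e x : L} {e' : L'} (he : σ e = c⁻¹ • e') (hx : ⁅e, x⁆ = μ • x) :
    ⁅e', σ x⁆ = (c * μ) • σ x := by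
  have h : c⁻¹ • ⁅e', σ x⁆ = μ • σ x := by rw [← smul_lie, ← he, ← σ.map_lie, hx, map_smul]
  rw [mul_smul, ← h, smul_inv_smul₀ hc]

namespace WData

variable {Γ : AddSubgroup ℂ} {V : Type*} [LieRing V] [LieAlgebra ℂ V] (w : WData Γ V)

theorem L_ne_zero (α : Γ) (i : ℕ) : w.L α i ≠ 0 :=
  w.basis_eq α i ▸ w.basis.ne_zero (α, i)

theorem smul_L_left_injective (α : Γ) (i : ℕ) : Function.Injective fun a : ℂ => a • w.L α i :=
  smul_left_injective ℂ (w.L_ne_zero α i)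

theorem repr_L (β : Γ) (j : ℕ) : w.basis.repr (w.L β j) = Finsupp.single (β, j) 1 := by
  rw [← w.basis_eq, w.basis.repr_self]

theorem lie_L_zero (α β : Γ) : ⁅w.L α 0, w.L β 0⁆ = ((β : ℂ) - α) • w.L (α + β) 0 := by
  simp [w.lie_L_L]

theorem lie_L_zero_zero (β : Γ) (j : ℕ) :
    ⁅w.L 0 0, w.L β j⁆ = (β : ℂ) • w.L β j + (j : ℂ) • w.L β (j - 1) := by
  simp [w.lie_L_L]

theorem repr_lie_L_zero_zero (x : V) (β : Γ) (j : ℕ) :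
    w.basis.repr ⁅w.L 0 0, x⁆ (β, j)
      = (β : ℂ) * w.basis.repr x (β, j) + ((j : ℂ) + 1) * w.basis.repr x (β, j + 1) := by
  suffices h : w.basis.coord (β, j) ∘ₗ LieAlgebra.ad ℂ V (w.L 0 0)
      = (β : ℂ) • w.basis.coord (β, j) + ((j : ℂ) + 1) • w.basis.coord (β, j + 1) from
    LinearMap.congr_fun h x
  refine w.basis.ext fun ⟨γ, k⟩ => ?_
  simp only [LinearMap.comp_apply, LieAlgebra.ad_apply, LinearMap.add_apply,
    LinearMap.smul_apply, Module.Basis.coord_apply, w.basis_eq, lie_L_zero_zero, map_add,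
    map_smul, repr_L, Finsupp.single_apply, Prod.mk.injEq, smul_eq_mul]
  rcases eq_or_ne γ β with rfl | hγ
  · split_ifs <;> simp_all <;> omega
  · simp [hγ]

theorem eq_of_mem_support_repr_of_lie_L_zero_zero_eq_smul {x : V} {μ : ℂ}
    (hμ : ⁅w.L 0 0, x⁆ = μ • x) {p : Γ × ℕ} (hp : p ∈ (w.basis.repr x).support) :
    (p.1 : ℂ) = μ ∧ p.2 = 0 := by
  set F := w.basis.repr x
  have hrec (β : Γ) (j : ℕ) : ((β : ℂ) - μ) * F (β, j) + ((j : ℂ) + 1) * F (β, j + 1) = 0 := by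
    have := w.repr_lie_L_zero_zero x β j
    rw [hμ, map_smul, Finsupp.smul_apply, smul_eq_mul] at this
    linear_combination -this
  obtain ⟨β, j⟩ := p
  rw [Finsupp.mem_support_iff] at hp
  have hβ : (β : ℂ) = μ := by
    by_contra hβ
    refine hp (eq_zero_of_hasFiniteSupport_of_succ_eq_zero (u := fun j => F (β, j))
      (F.hasFiniteSupport.fun_comp_of_injective (Prod.mk_right_injective β)) (fun i hi => ?_) j)
    simpa [hi, sub_ne_zero.2 hβ] using hrec β i
  refine ⟨hβ, Nat.eq_zero_of_not_pos fun hj => hp ?_⟩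
  obtain ⟨i, rfl⟩ := Nat.exists_eq_add_of_lt hj
  simpa [hβ, Nat.cast_add_one_ne_zero] using hrec β i

theorem eq_smul_L_of_lie_L_zero_zero_eq_smul {x : V} (hx : x ≠ 0) {μ : ℂ}
    (hμ : ⁅w.L 0 0, x⁆ = μ • x) :
    ∃ (hμΓ : μ ∈ Γ) (a : ℂˣ), x = (a : ℂ) • w.L ⟨μ, hμΓ⟩ 0 := by
  set F := w.basis.repr x
  have hsupp {p : Γ × ℕ} (hp : p ∈ F.support) : (p.1 : ℂ) = μ ∧ p.2 = 0 :=
    w.eq_of_mem_support_repr_of_lie_L_zero_zero_eq_smul hμ hp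
  obtain ⟨⟨β, j⟩, hp⟩ := Finsupp.support_nonempty_iff.2
    ((map_ne_zero_iff _ w.basis.repr.injective).2 hx)
  obtain ⟨hβ, rfl⟩ := hsupp hp
  have hμΓ : μ ∈ Γ := hβ ▸ β.2
  obtain rfl : β = ⟨μ, hμΓ⟩ := Subtype.ext hβ
  have hF : F = Finsupp.single (⟨μ, hμΓ⟩, 0) (F (⟨μ, hμΓ⟩, 0)) :=
    Finsupp.eq_single_iff.2 ⟨fun p hp' => by
      obtain ⟨h1, h2⟩ := hsupp hp'
      simp [Prod.ext_iff, Subtype.ext_iff, h1, h2], rfl⟩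
  refine ⟨hμΓ, Units.mk0 _ (Finsupp.mem_support_iff.1 hp), ?_⟩
  rw [Units.val_mk0, ← w.basis_eq, ← w.basis.repr_symm_single, ← hF,
    w.basis.repr.symm_apply_apply]

theorem exists_apply_L_eq_smul (σ : V ≃ₗ⁅ℂ⁆ V) {c : ℂ} (hc : c ≠ 0)
    (h0 : σ (w.L 0 0) = c⁻¹ • w.L 0 0) (α : Γ) :
    ∃ (hα : c * (α : ℂ) ∈ Γ) (a : ℂˣ), σ (w.L α 0) = (a : ℂ) • w.L ⟨c * α, hα⟩ 0 := by
  have hα : ⁅w.L 0 0, w.L α 0⁆ = (α : ℂ) • w.L α 0 := by simpa using w.lie_L_zero 0 α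
  exact w.eq_smul_L_of_lie_L_zero_zero_eq_smul
    ((map_ne_zero_iff _ σ.injective).2 (w.L_ne_zero α 0))
    (σ.toLieHom.lie_apply_eq_smul_of_apply_eq_smul hc h0 hα)

theorem coeff_add_of_ne (σ : V →ₗ⁅ℂ⁆ V) {c : ℂ} (hmem : ∀ α : Γ, c * (α : ℂ) ∈ Γ) {f : Γ → ℂ}
    (hf : ∀ α, σ (w.L α 0) = f α • w.L ⟨c * α, hmem α⟩ 0) {α β : Γ} (hαβ : α ≠ β) :
    f (α + β) = c * f α * f β := by
  have hidx : (⟨c * α, hmem α⟩ + ⟨c * β, hmem β⟩ : Γ) = ⟨c * (α + β : Γ), hmem (α + β)⟩ :=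
    Subtype.ext (by push_cast; ring)
  have h := σ.map_lie (w.L α 0) (w.L β 0)
  rw [w.lie_L_zero, map_smul, hf, hf, hf, smul_lie, lie_smul, w.lie_L_zero, hidx] at h
  simp only [smul_smul] at h
  have hsub : (β : ℂ) - α ≠ 0 := sub_ne_zero.2 fun h => hαβ (Subtype.ext h.symm)
  refine mul_left_cancel₀ hsub ?_
  linear_combination w.smul_L_left_injective _ _ h

end WData

/-- If `σ` is an automorphism of `W` with `σ(L_{0,0}) = c⁻¹ L_{0,0}`,
then `cΓ ⊆ Γ` and there is a character `τ : Γ → ℂ*` with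
`σ(L_{α,0}) = c⁻¹ τ(α) L_{cα,0}` for all `α ∈ Γ`. -/
theorem W_automorphism_on_L_alpha_0 (Γ : AddSubgroup ℂ) (hΓ : Γ ≠ ⊥)
    {V : Type*} [LieRing V] [LieAlgebra ℂ V] (w : WData Γ V)
    (σ : V ≃ₗ⁅ℂ⁆ V) (c : ℂ) (hc : c ≠ 0)
    (h0 : σ (w.L 0 0) = c⁻¹ • w.L 0 0) :
    ∃ (hmem : ∀ α : Γ, c * (α : ℂ) ∈ Γ) (τ : Multiplicative ↥Γ →* ℂˣ),
      ∀ α : Γ, σ (w.L α 0) = (c⁻¹ * charVal τ α) • w.L ⟨c * (α : ℂ), hmem α⟩ 0 := by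
  have : Nontrivial Γ := (AddSubgroup.nontrivial_iff_ne_bot Γ).2 hΓ
  choose hmem f hf using w.exists_apply_L_eq_smul σ hc h0
  have hf0 : (f 0 : ℂ) = c⁻¹ := by
    have hidx : (⟨c * ((0 : Γ) : ℂ), hmem 0⟩ : Γ) = 0 := Subtype.ext (by simp)
    have h := hf 0
    rw [h0, hidx] at h
    exact (w.smul_L_left_injective 0 0 h).symm
  let τ₀ (α : Γ) : ℂˣ := Units.mk0 c hc * f α
  have hτ₀ : ∀ a b, τ₀ (a + b) = τ₀ a * τ₀ b := by
    refine map_add_of_map_add_of_ne (Units.ext ?_) fun a b hab => Units.ext ?_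
    · simp [τ₀, hf0, hc]
    · simp only [τ₀, Units.val_mul, Units.val_mk0]
      linear_combination c * w.coeff_add_of_ne σ.toLieHom hmem hf hab
  refine ⟨hmem, MonoidHom.mk' (fun a => τ₀ a.toAdd) fun a b => hτ₀ a.toAdd b.toAdd, fun α => ?_⟩
  rw [hf α]
  simp [charVal, τ₀, hc]
end
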